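/- arXiv:2511.08157 — 2 statements merged into one kernel-verified Lean document; each statement's English description precedes it below -/
import Mathlib

section
/- Let C be a weakly idempotent complete exact category and let C' be the full subcategory of objects X such that every morphism in C with target X is admissible. Then C', with the exact structure inherited from C, is an abelian category, and the inclusion functor C' → C is exact (every short exact sequence in C' is a conflation in C). In particular, C' is a wide subcategory of C. -/
open CategoryTheory Category Limits

universe v u

/-- A Quillen exact structure on an additive category, following Bühler: a class of
kernel-cokernel pairs (conflations), closed under isomorphisms, containing the identities,
with inflations and deflations closed under composition, and admitting pushouts of
inflations along arbitrary morphisms and pullbacks of deflations along arbitrary morphisms. -/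
structure ExactStructure (C : Type u) [Category.{v} C] [Preadditive C] [HasZeroObject C]
    [HasBinaryBiproducts C] where
  /-- the class of conflations (admissible exact sequences) -/
  IsConflation : ∀ {X Y Z : C}, (X ⟶ Y) → (Y ⟶ Z) → Prop
  comp_zero : ∀ {X Y Z : C} {f : X ⟶ Y} {g : Y ⟶ Z}, IsConflation f g → f ≫ g = 0
  isKernel : ∀ {X Y Z : C} {f : X ⟶ Y} {g : Y ⟶ Z}, IsConflation f g →
    ∀ {W : C} (k : W ⟶ Y), k ≫ g = 0 → ∃! l : W ⟶ X, l ≫ f = k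
  isCokernel : ∀ {X Y Z : C} {f : X ⟶ Y} {g : Y ⟶ Z}, IsConflation f g →
    ∀ {W : C} (k : Y ⟶ W), f ≫ k = 0 → ∃! l : Z ⟶ W, g ≫ l = k
  conflation_iso : ∀ {X Y Z X' Y' Z' : C} {f : X ⟶ Y} {g : Y ⟶ Z}
    (eX : X ≅ X') (eY : Y ≅ Y') (eZ : Z ≅ Z') {f' : X' ⟶ Y'} {g' : Y' ⟶ Z'},
    IsConflation f g → f ≫ eY.hom = eX.hom ≫ f' → g ≫ eZ.hom = eY.hom ≫ g' →
    IsConflation f' g'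
  id_inflation : ∀ X : C, ∃ (Z : C) (g : X ⟶ Z), IsConflation (𝟙 X) g
  id_deflation : ∀ X : C, ∃ (Z : C) (f : Z ⟶ X), IsConflation f (𝟙 X)
  inflation_comp : ∀ {X Y Z : C} (f : X ⟶ Y) (g : Y ⟶ Z),
    (∃ (W : C) (p : Y ⟶ W), IsConflation f p) →
    (∃ (W : C) (p : Z ⟶ W), IsConflation g p) →
    ∃ (W : C) (p : Z ⟶ W), IsConflation (f ≫ g) p
  deflation_comp : ∀ {X Y Z : C} (f : X ⟶ Y) (g : Y ⟶ Z),
    (∃ (W : C) (i : W ⟶ X), IsConflation i f) →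
    (∃ (W : C) (i : W ⟶ Y), IsConflation i g) →
    ∃ (W : C) (i : W ⟶ X), IsConflation i (f ≫ g)
  pushout_inflation : ∀ {X Y Z : C} (f : X ⟶ Y),
    (∃ (W : C) (p : Y ⟶ W), IsConflation f p) → ∀ (a : X ⟶ Z),
    ∃ (P : C) (a' : Y ⟶ P) (f' : Z ⟶ P), IsPushout f a a' f' ∧
      ∃ (W : C) (p : P ⟶ W), IsConflation f' p
  pullback_deflation : ∀ {X Y Z : C} (g : Y ⟶ Z),
    (∃ (W : C) (i : W ⟶ Y), IsConflation i g) → ∀ (a : X ⟶ Z),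
    ∃ (P : C) (a' : P ⟶ Y) (g' : P ⟶ X), IsPullback a' g' g a ∧
      ∃ (W : C) (i : W ⟶ P), IsConflation i g'

namespace ExactStructure

variable {C : Type u} [Category.{v} C] [Preadditive C] [HasZeroObject C]
  [HasBinaryBiproducts C] (E : ExactStructure C)

/-- A morphism is an inflation if it is the first map of a conflation. -/
def Inflation {X Y : C} (f : X ⟶ Y) : Prop := ∃ (Z : C) (g : Y ⟶ Z), E.IsConflation f g

/-- A morphism is a deflation if it is the second map of a conflation. -/
def Deflation {X Y : C} (f : X ⟶ Y) : Prop := ∃ (W : C) (g : W ⟶ X), E.IsConflation g f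

/-- A morphism is admissible if it factors as a deflation followed by an inflation. -/
def Admissible {X Y : C} (f : X ⟶ Y) : Prop :=
  ∃ (I : C) (p : X ⟶ I) (i : I ⟶ Y), E.Deflation p ∧ E.Inflation i ∧ p ≫ i = f

/-- The exact category is weakly idempotent complete: whenever `f ≫ g` is an inflation so
is `f`, and whenever `f ≫ g` is a deflation so is `g`. -/
def WeaklyIdempotentComplete : Prop :=
  (∀ {X Y Z : C} (f : X ⟶ Y) (g : Y ⟶ Z), E.Inflation (f ≫ g) → E.Inflation f) ∧
  (∀ {X Y Z : C} (f : X ⟶ Y) (g : Y ⟶ Z), E.Deflation (f ≫ g) → E.Deflation g)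

/-- Membership in the full subcategory `C'` of objects `X` such that every morphism of `C`
with target `X` is admissible. -/
def GoodTarget (X : C) : Prop := ∀ ⦃A : C⦄ (f : A ⟶ X), E.Admissible f

end ExactStructure

variable {C : Type u} [Category.{v} C] [Preadditive C] [HasZeroObject C]
  [HasBinaryBiproducts C]

/-!
The heart of the matter is closure under extensions. Given a conflation `L ⟶ M ⟶ N` with `L` and `N`
good and `f : A ⟶ M`, pull the conflation back along the image of `f ≫ g`: the lift `u` of `f`
becomes a deflation after projecting, so `[u, l] : A ⊞ L ⟶ P` is a deflation. The image of its
kernel in `L` is admissible because `L` is good, and weak idempotent completeness turns the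
resulting factorisation into one of `u`, hence of `f`.

Kernels of deflations out of good objects and cokernels of inflations into good objects are good, so
the admissible factorisation of a morphism of `C'` computes its kernel and cokernel inside `C'`. For
a monomorphism that kernel vanishes, so it is an inflation, hence a normal monomorphism; dually for
epimorphisms. Uniqueness of kernels and cokernels then identifies the kernel-cokernel pairs of `C'`
with the conflations.
-/

namespace CategoryTheory.Limits

variable {D : Type*} [Category D] [HasZeroMorphisms D] {X Y Z : D} {f : X ⟶ Y} {g : Y ⟶ Z}

noncomputable def KernelFork.IsLimit.ofExistsUnique (w : f ≫ g = 0)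
    (h : ∀ {V : D} (k : V ⟶ Y), k ≫ g = 0 → ∃! l : V ⟶ X, l ≫ f = k) :
    IsLimit (KernelFork.ofι f w) :=
  Fork.IsLimit.ofExistsUnique fun s => h s.ι (KernelFork.condition s)

noncomputable def CokernelCofork.IsColimit.ofExistsUnique (w : f ≫ g = 0)
    (h : ∀ {V : D} (k : Y ⟶ V), f ≫ k = 0 → ∃! l : Z ⟶ V, g ≫ l = k) :
    IsColimit (CokernelCofork.ofπ g w) :=
  Cofork.IsColimit.ofExistsUnique fun s => h s.π (CokernelCofork.condition s)

end CategoryTheory.Limits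

namespace ExactStructure

open ZeroObject

variable (E : ExactStructure C)

lemma mono_of_inflation {X Y : C} {f : X ⟶ Y} (hf : E.Inflation f) : Mono f := by
  obtain ⟨Z, g, hfg⟩ := hf
  refine ⟨fun u v huv => ?_⟩
  obtain ⟨l, -, hl⟩ := E.isKernel hfg (u ≫ f) (by rw [assoc, E.comp_zero hfg]; simp)
  rw [hl u rfl, hl v huv.symm]

lemma epi_of_deflation {X Y : C} {g : X ⟶ Y} (hg : E.Deflation g) : Epi g := by
  obtain ⟨W, f, hfg⟩ := hg
  refine ⟨fun u v huv => ?_⟩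
  obtain ⟨l, -, hl⟩ := E.isCokernel hfg (g ≫ u) (by rw [← assoc, E.comp_zero hfg, zero_comp])
  rw [hl u rfl, hl v huv.symm]

lemma inflation_of_isIso {X Y : C} (f : X ⟶ Y) [IsIso f] : E.Inflation f := by
  obtain ⟨Z, g, hg⟩ := E.id_inflation X
  exact ⟨Z, inv f ≫ g,
    E.conflation_iso (Iso.refl X) (asIso f) (Iso.refl Z) hg (by simp) (by simp)⟩

lemma deflation_of_isIso {X Y : C} (f : X ⟶ Y) [IsIso f] : E.Deflation f := by
  obtain ⟨W, g, hg⟩ := E.id_deflation Y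
  exact ⟨W, g ≫ inv f,
    E.conflation_iso (Iso.refl W) (asIso f).symm (Iso.refl Y) hg (by simp) (by simp)⟩

lemma isConflation_of_isKernel {K Y Z : C} {k : K ⟶ Y} {g : Y ⟶ Z} [Mono k]
    (hg : E.Deflation g) (hkg : k ≫ g = 0)
    (lift : ∀ {T : C} (t : T ⟶ Y), t ≫ g = 0 → ∃ s : T ⟶ K, s ≫ k = t) :
    E.IsConflation k g := by
  obtain ⟨W, i, hig⟩ := hg
  have : Mono i := E.mono_of_inflation ⟨Z, g, hig⟩
  obtain ⟨s, hs⟩ := lift i (E.comp_zero hig)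
  obtain ⟨t, ht, -⟩ := E.isKernel hig k hkg
  have hst : s ≫ t = 𝟙 W := by rw [← cancel_mono i, assoc, ht, hs, id_comp]
  have hts : t ≫ s = 𝟙 K := by rw [← cancel_mono k, assoc, hs, ht, id_comp]
  exact E.conflation_iso ⟨s, t, hst, hts⟩ (Iso.refl Y) (Iso.refl Z) hig
    (by simpa using hs.symm) (by simp)

lemma isIso_of_isConflation_of_inflation_eq_zero {K X I : C} {k : K ⟶ X} {p : X ⟶ I}
    (h : E.IsConflation k p) (hk : k = 0) : IsIso p := by
  have : Epi p := E.epi_of_deflation ⟨K, k, h⟩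
  obtain ⟨s, hs, -⟩ := E.isCokernel h (𝟙 X) (by rw [hk, zero_comp])
  exact ⟨s, hs, by rw [← cancel_epi p, ← assoc, hs, id_comp, comp_id]⟩

lemma isIso_of_isConflation_of_deflation_eq_zero {X Y Q : C} {i : X ⟶ Y} {c : Y ⟶ Q}
    (h : E.IsConflation i c) (hc : c = 0) : IsIso i := by
  have : Mono i := E.mono_of_inflation ⟨Q, c, h⟩
  obtain ⟨s, hs, -⟩ := E.isKernel h (𝟙 Y) (by rw [hc, Limits.comp_zero])
  exact ⟨s, by rw [← cancel_mono i, assoc, hs, id_comp, comp_id], hs⟩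

lemma deflation_zero (X : C) : E.Deflation (0 : X ⟶ 0) := by
  obtain ⟨Z, g, hg⟩ := E.id_inflation X
  have : Epi g := E.epi_of_deflation ⟨X, _, hg⟩
  have hZ : IsZero Z := by
    rw [IsZero.iff_id_eq_zero, ← cancel_epi g, Limits.comp_zero, comp_id]
    simpa using E.comp_zero hg
  rw [(isZero_zero C).eq_of_tgt 0 (g ≫ hZ.isoZero.hom)]
  exact E.deflation_comp _ _ ⟨X, _, hg⟩ (E.deflation_of_isIso _)

lemma deflation_of_isPullback {X Y Z P : C} {g : Y ⟶ Z} (hg : E.Deflation g)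
    {a : X ⟶ Z} {a' : P ⟶ Y} {g' : P ⟶ X} (h : IsPullback a' g' g a) : E.Deflation g' := by
  obtain ⟨Q, b', q', hpb, hq'⟩ := E.pullback_deflation g hg a
  rw [← h.isoIsPullback_hom_snd _ _ hpb]
  exact E.deflation_comp _ _ (E.deflation_of_isIso _) hq'

lemma isConflation_of_isPullback {W X Y Z P : C} {i : W ⟶ Y} {g : Y ⟶ Z}
    (hig : E.IsConflation i g) {a : X ⟶ Z} {a' : P ⟶ Y} {g' : P ⟶ X}
    (h : IsPullback a' g' g a) : ∃ i' : W ⟶ P, E.IsConflation i' g' := by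
  obtain ⟨i', hi'a', hi'g'⟩ : ∃ i' : W ⟶ P, i' ≫ a' = i ∧ i' ≫ g' = 0 :=
    ⟨h.lift i 0 (by simp [E.comp_zero hig]), h.lift_fst .., h.lift_snd ..⟩
  have : Mono i := E.mono_of_inflation ⟨Z, g, hig⟩
  have : Mono i' := mono_of_mono_fac hi'a'
  refine ⟨i', E.isConflation_of_isKernel (E.deflation_of_isPullback ⟨W, i, hig⟩ h) hi'g'
    fun t ht => ?_⟩
  obtain ⟨s, hs, -⟩ := E.isKernel hig (t ≫ a') (by rw [assoc, h.w, ← assoc, ht, zero_comp])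
  exact ⟨s, h.hom_ext (by rw [assoc, hi'a', hs]) (by rw [assoc, hi'g', Limits.comp_zero, ht])⟩

lemma isConflation_of_isPullback_inflation {M N I Q P : C} {g : M ⟶ N} (hg : E.Deflation g)
    {i : I ⟶ N} {q : N ⟶ Q} (hiq : E.IsConflation i q) {π₁ : P ⟶ M} {π₂ : P ⟶ I}
    (h : IsPullback π₁ π₂ g i) : E.IsConflation π₁ (g ≫ q) := by
  have : Mono i := E.mono_of_inflation ⟨Q, q, hiq⟩
  have : Mono π₁ := h.mono_fst_of_mono
  refine E.isConflation_of_isKernel (E.deflation_comp g q hg ⟨I, i, hiq⟩)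
    (by rw [← assoc, h.w, assoc, E.comp_zero hiq, Limits.comp_zero]) fun t ht => ?_
  obtain ⟨s, hs, -⟩ := E.isKernel hiq (t ≫ g) (by rwa [assoc])
  exact ⟨h.lift t s hs.symm, h.lift_fst ..⟩

lemma isPullback_biprod_fst_desc {L P I A : C} {l : L ⟶ P} {π : P ⟶ I}
    (hlπ : E.IsConflation l π) (u : A ⟶ P) :
    IsPullback biprod.fst (biprod.desc u l) (u ≫ π) π := by
  have : Mono l := E.mono_of_inflation ⟨I, π, hlπ⟩
  have hcomm : biprod.fst ≫ u ≫ π = biprod.desc u l ≫ π := by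
    ext <;> simp [E.comp_zero hlπ]
  refine IsPullback.of_isLimit (PullbackCone.IsLimit.mk hcomm (fun s => biprod.lift s.fst
    (E.isKernel hlπ (s.snd - s.fst ≫ u) (by simp [s.condition])).choose) (fun s => by simp)
    (fun s => ?_) fun s r hr₁ hr₂ => ?_)
  all_goals
    obtain ⟨hx, -⟩ := (E.isKernel hlπ (s.snd - s.fst ≫ u) (by simp [s.condition])).choose_spec
  · simp [biprod.lift_desc, hx]
  · ext
    · simpa using hr₁
    · rw [biprod.lift_snd, ← cancel_mono l, hx, ← hr₂, ← hr₁, biprod.desc_eq]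
      simp

lemma deflation_biprod_desc {L P I A : C} {l : L ⟶ P} {π : P ⟶ I} (hlπ : E.IsConflation l π)
    {u : A ⟶ P} (hu : E.Deflation (u ≫ π)) : E.Deflation (biprod.desc u l) :=
  E.deflation_of_isPullback hu (E.isPullback_biprod_fst_desc hlπ u)

lemma goodTarget_zero : E.GoodTarget (0 : C) := fun A _ =>
  ⟨0, 0, 𝟙 0, E.deflation_zero A, E.inflation_of_isIso _, (isZero_zero C).eq_of_tgt _ _⟩

lemma goodTarget_of_iso {X Y : C} (e : X ≅ Y) (hX : E.GoodTarget X) : E.GoodTarget Y := by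
  intro A f
  obtain ⟨I, p, i, hp, hi, hpi⟩ := hX (f ≫ e.inv)
  exact ⟨I, p, i ≫ e.hom, hp, E.inflation_comp _ _ hi (E.inflation_of_isIso _),
    by rw [← assoc, hpi, assoc, e.inv_hom_id, comp_id]⟩

lemma admissible_of_epi_comp (hwic : E.WeaklyIdempotentComplete) {S A V B : C} {σ : S ⟶ A}
    [Epi σ] {t : A ⟶ B} {D : S ⟶ V} {j : V ⟶ B} (hD : E.Deflation D) (hj : E.Inflation j)
    (h : σ ≫ t = D ≫ j) : E.Admissible t := by
  obtain ⟨Q, c, hjc⟩ := id hj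
  have : Mono j := E.mono_of_inflation hj
  obtain ⟨t', ht', -⟩ := E.isKernel hjc t
    (by rw [← cancel_epi σ, ← assoc, h, assoc, E.comp_zero hjc]; simp)
  have hσt' : σ ≫ t' = D := by rw [← cancel_mono j, assoc, ht', h]
  exact ⟨V, t', j, hwic.2 σ t' (hσt' ▸ hD), hj, ht'⟩

/-- `w` is a deflation by weak idempotent completeness; the image of `m ≫ d` is its kernel, and
the deflation onto it is obtained by pulling `d` back. -/
lemma admissible_inflation_comp_deflation (hwic : E.WeaklyIdempotentComplete) {J X P W : C}
    {m : J ⟶ X} {c : X ⟶ W} (hmc : E.IsConflation m c) {d : X ⟶ P} (hd : E.Deflation d)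
    {w : P ⟶ W} (hw : d ≫ w = c) : E.Admissible (m ≫ d) := by
  obtain ⟨V, j, hjw⟩ := hwic.2 d w (hw ▸ ⟨J, m, hmc⟩)
  have : Mono j := E.mono_of_inflation ⟨W, w, hjw⟩
  obtain ⟨P', a, D, hpb, hD⟩ := E.pullback_deflation d hd j
  obtain ⟨t, ht, -⟩ := E.isKernel hmc a
    (by rw [← hw, ← assoc, hpb.w, assoc, E.comp_zero hjw, Limits.comp_zero])
  obtain ⟨s, hs, -⟩ := E.isKernel hjw (m ≫ d) (by rw [assoc, hw, E.comp_zero hmc])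
  have hra : hpb.lift m s hs.symm ≫ a = m := hpb.lift_fst ..
  have hrD : hpb.lift m s hs.symm ≫ D = s := hpb.lift_snd ..
  have htD : t ≫ hpb.lift m s hs.symm ≫ D = D := by
    rw [← cancel_mono j, hrD, assoc, hs, ← assoc, ht, hpb.w]
  exact ⟨V, _, j, hwic.2 t _ (htD ▸ hD), ⟨W, w, hjw⟩, by rw [assoc, ← hpb.w, ← assoc, hra]⟩

lemma goodTarget_of_inflation (hwic : E.WeaklyIdempotentComplete) {K X : C} {k : K ⟶ X}
    (hk : E.Inflation k) (hX : E.GoodTarget X) : E.GoodTarget K := by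
  intro T t
  obtain ⟨I, p, hkp⟩ := id hk
  have : Mono k := E.mono_of_inflation hk
  obtain ⟨J, e, m, he, hm, hem⟩ := hX (t ≫ k)
  have : Epi e := E.epi_of_deflation he
  obtain ⟨m', hm', -⟩ := E.isKernel hkp m
    (by rw [← cancel_epi e, ← assoc, hem, assoc, E.comp_zero hkp]; simp)
  exact ⟨J, e, m', he, hwic.1 m' k (hm' ▸ hm), by rw [← cancel_mono k, assoc, hm', hem]⟩

/-- To factor `t : T ⟶ Q`, pull the deflation `c` back along `t` and factor the resulting
morphism into `Y`. -/
lemma goodTarget_of_deflation (hwic : E.WeaklyIdempotentComplete) {Y Q : C} {c : Y ⟶ Q}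
    (hc : E.Deflation c) (hY : E.GoodTarget Y) : E.GoodTarget Q := by
  intro T t
  obtain ⟨X, i, hic⟩ := id hc
  obtain ⟨P, a, c', hpb, hc'⟩ := E.pullback_deflation c hc t
  have : Epi c' := E.epi_of_deflation hc'
  obtain ⟨J, e, m, he, ⟨W, cm, hmcm⟩, hem⟩ := hY a
  have hi : hpb.lift i 0 (by rw [E.comp_zero hic, zero_comp]) ≫ e ≫ m = i := by
    rw [hem, hpb.lift_fst]
  obtain ⟨w, hw, -⟩ := E.isCokernel hic cm
    (by rw [← hi, assoc, assoc, E.comp_zero hmcm]; simp)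
  obtain ⟨V, D, j, hD, hj, hDj⟩ := E.admissible_inflation_comp_deflation hwic hmcm hc hw
  exact E.admissible_of_epi_comp hwic (E.deflation_comp e D he hD) hj
    (by rw [← hpb.w, ← hem, assoc, ← hDj, assoc])

lemma deflation_biprod_snd (hwic : E.WeaklyIdempotentComplete) (X Y : C) :
    E.Deflation (biprod.snd : X ⊞ Y ⟶ Y) :=
  hwic.2 biprod.inr _ (by rw [biprod.inr_snd]; exact E.id_deflation Y)

lemma isConflation_inl_snd (hwic : E.WeaklyIdempotentComplete) (X Y : C) :
    E.IsConflation (biprod.inl : X ⟶ X ⊞ Y) biprod.snd :=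
  E.isConflation_of_isKernel (E.deflation_biprod_snd hwic X Y) biprod.inl_snd
    fun t ht => ⟨t ≫ biprod.fst, by ext <;> simp [ht]⟩

lemma isConflation_biprod_map_id (hwic : E.WeaklyIdempotentComplete) (A : C) {J X W : C}
    {m : J ⟶ X} {c : X ⟶ W} (hmc : E.IsConflation m c) :
    E.IsConflation (biprod.map (𝟙 A) m) (biprod.snd ≫ c) := by
  have : Mono m := E.mono_of_inflation ⟨W, c, hmc⟩
  refine E.isConflation_of_isKernel
    (E.deflation_comp _ _ (E.deflation_biprod_snd hwic A X) ⟨J, m, hmc⟩)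
    (by simp [E.comp_zero hmc]) fun t ht => ?_
  obtain ⟨s, hs, -⟩ := E.isKernel hmc (t ≫ biprod.snd) (by rwa [assoc])
  exact ⟨biprod.lift (t ≫ biprod.fst) s, by ext <;> simp [hs]⟩

/-- The kernel `k` of the deflation `[u, l] : A ⊞ L ⟶ P` maps to the good object `L`; with `m` the
image of that map, `(𝟙 ⊞ m) ≫ [u, l]` is admissible, and its factorisation descends to `u` along
the split epimorphism `[-(k ≫ fst), 𝟙] : K ⊞ A ⟶ A`. -/
lemma admissible_of_deflation_comp (hwic : E.WeaklyIdempotentComplete) {L P I A : C}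
    {l : L ⟶ P} {π : P ⟶ I} (hlπ : E.IsConflation l π) (hL : E.GoodTarget L) {u : A ⟶ P}
    (hu : E.Deflation (u ≫ π)) : E.Admissible u := by
  obtain ⟨K, k, hk⟩ := E.deflation_biprod_desc hlπ hu
  obtain ⟨J, e, m, he, ⟨W, c, hmc⟩, hem⟩ := hL (k ≫ biprod.snd)
  obtain ⟨w, hw, -⟩ := E.isCokernel hk (biprod.snd ≫ c)
    (by rw [← assoc, ← hem, assoc, E.comp_zero hmc, Limits.comp_zero])
  obtain ⟨V, D, j, hD, hj, hDj⟩ := E.admissible_inflation_comp_deflation hwic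
    (E.isConflation_biprod_map_id hwic A hmc) ⟨K, k, hk⟩ hw
  have hδ : E.Deflation (biprod.desc (e ≫ biprod.inr) biprod.inl : K ⊞ A ⟶ A ⊞ J) :=
    E.deflation_biprod_desc (E.isConflation_inl_snd hwic A J) (by simpa using he)
  let σ : K ⊞ A ⟶ A := biprod.desc (-(k ≫ biprod.fst)) (𝟙 A)
  have : Epi σ := epi_of_epi_fac (biprod.inr_desc _ _)
  refine E.admissible_of_epi_comp hwic (σ := σ) (E.deflation_comp _ _ hδ hD) hj ?_
  have hkd : k ≫ biprod.fst ≫ u + k ≫ biprod.snd ≫ l = 0 := by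
    rw [← Preadditive.comp_add, ← biprod.desc_eq, E.comp_zero hk]
  rw [assoc, hDj]
  ext
  · simp [σ, reassoc_of% hem, neg_eq_iff_add_eq_zero, hkd]
  · simp [σ]

theorem goodTarget_of_isConflation (hwic : E.WeaklyIdempotentComplete) {L M N : C}
    {l : L ⟶ M} {g : M ⟶ N} (hlg : E.IsConflation l g) (hL : E.GoodTarget L)
    (hN : E.GoodTarget N) : E.GoodTarget M := by
  intro A f
  obtain ⟨I, p, i, hp, ⟨Q, q, hiq⟩, hpi⟩ := hN (f ≫ g)
  obtain ⟨P, π₁, π₂, hpb, -⟩ := E.pullback_deflation g ⟨L, l, hlg⟩ i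
  obtain ⟨l', hl'π₂⟩ := E.isConflation_of_isPullback hlg hpb
  obtain ⟨V, v, j, hv, hj, hvj⟩ := E.admissible_of_deflation_comp hwic hl'π₂ hL
    (u := hpb.lift f p hpi.symm) (by rwa [hpb.lift_snd])
  have hπ₁ := E.isConflation_of_isPullback_inflation ⟨L, l, hlg⟩ hiq hpb
  exact ⟨V, v, j ≫ π₁, hv, E.inflation_comp _ _ hj ⟨Q, _, hπ₁⟩,
    by rw [← assoc, hvj, hpb.lift_fst]⟩

instance : ObjectProperty.IsClosedUnderIsomorphisms E.GoodTarget :=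
  ⟨E.goodTarget_of_iso⟩

instance : ObjectProperty.ContainsZero E.GoodTarget :=
  ⟨⟨0, isZero_zero C, E.goodTarget_zero⟩⟩

lemma isClosedUnderBinaryProducts (hwic : E.WeaklyIdempotentComplete) :
    ObjectProperty.IsClosedUnderBinaryProducts E.GoodTarget where
  limitsOfShape_le := by
    rintro _ ⟨p⟩
    refine ObjectProperty.prop_of_iso _ (IsLimit.conePointUniqueUpToIso
      (BinaryBiproduct.isLimit _ _)
      ((IsLimit.postcomposeHomEquiv (diagramIsoPair p.diag) _).2 p.isLimit)) ?_
    exact E.goodTarget_of_isConflation hwic (E.isConflation_inl_snd hwic _ _)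
      (p.prop_diag_obj _) (p.prop_diag_obj _)

abbrev GoodSubcategory : Type u := ObjectProperty.FullSubcategory E.GoodTarget

section GoodSubcategory

variable {E}

lemma comp_eq_zero_of_isConflation {X Y Z : E.GoodSubcategory} {f : X ⟶ Y} {g : Y ⟶ Z}
    (h : E.IsConflation f.hom g.hom) : f ≫ g = 0 :=
  ObjectProperty.hom_ext _ (E.comp_zero h)

lemma existsUnique_lift_of_isConflation {X Y Z : E.GoodSubcategory} {f : X ⟶ Y} {g : Y ⟶ Z}
    (h : E.IsConflation f.hom g.hom) {V : E.GoodSubcategory} (k : V ⟶ Y) (hk : k ≫ g = 0) :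
    ∃! l : V ⟶ X, l ≫ f = k := by
  obtain ⟨l, hl, hl_uniq⟩ := E.isKernel h k.hom (congrArg InducedCategory.Hom.hom hk)
  exact ⟨ObjectProperty.homMk l, ObjectProperty.hom_ext _ hl, fun l' hl' =>
    ObjectProperty.hom_ext _ (hl_uniq l'.hom (congrArg InducedCategory.Hom.hom hl'))⟩

lemma existsUnique_desc_of_isConflation {X Y Z : E.GoodSubcategory} {f : X ⟶ Y} {g : Y ⟶ Z}
    (h : E.IsConflation f.hom g.hom) {V : E.GoodSubcategory} (k : Y ⟶ V) (hk : f ≫ k = 0) :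
    ∃! l : Z ⟶ V, g ≫ l = k := by
  obtain ⟨l, hl, hl_uniq⟩ := E.isCokernel h k.hom (congrArg InducedCategory.Hom.hom hk)
  exact ⟨ObjectProperty.homMk l, ObjectProperty.hom_ext _ hl, fun l' hl' =>
    ObjectProperty.hom_ext _ (hl_uniq l'.hom (congrArg InducedCategory.Hom.hom hl'))⟩

noncomputable def isLimitOfIsConflation {X Y Z : E.GoodSubcategory} {f : X ⟶ Y} {g : Y ⟶ Z}
    (h : E.IsConflation f.hom g.hom) :
    IsLimit (KernelFork.ofι f (comp_eq_zero_of_isConflation h)) :=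
  KernelFork.IsLimit.ofExistsUnique _ (existsUnique_lift_of_isConflation h)

noncomputable def isColimitOfIsConflation {X Y Z : E.GoodSubcategory} {f : X ⟶ Y} {g : Y ⟶ Z}
    (h : E.IsConflation f.hom g.hom) :
    IsColimit (CokernelCofork.ofπ g (comp_eq_zero_of_isConflation h)) :=
  CokernelCofork.IsColimit.ofExistsUnique _ (existsUnique_desc_of_isConflation h)

lemma mono_of_inflation_hom {X Y : E.GoodSubcategory} {f : X ⟶ Y} (hf : E.Inflation f.hom) :
    Mono f :=
  (ObjectProperty.ι _).mono_of_mono_map (E.mono_of_inflation hf)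

lemma epi_of_deflation_hom {X Y : E.GoodSubcategory} {f : X ⟶ Y} (hf : E.Deflation f.hom) :
    Epi f :=
  (ObjectProperty.ι _).epi_of_epi_map (E.epi_of_deflation hf)

lemma exists_isConflation_of_deflation_hom (hwic : E.WeaklyIdempotentComplete)
    {X I : E.GoodSubcategory} {p : X ⟶ I} (hp : E.Deflation p.hom) :
    ∃ (K : E.GoodSubcategory) (k : K ⟶ X), E.IsConflation k.hom p.hom := by
  obtain ⟨K, k, hkp⟩ := hp
  exact ⟨⟨K, E.goodTarget_of_inflation hwic ⟨I.obj, p.hom, hkp⟩ X.property⟩,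
    ObjectProperty.homMk k, hkp⟩

lemma exists_isConflation_of_inflation_hom (hwic : E.WeaklyIdempotentComplete)
    {I Y : E.GoodSubcategory} {i : I ⟶ Y} (hi : E.Inflation i.hom) :
    ∃ (Q : E.GoodSubcategory) (c : Y ⟶ Q), E.IsConflation i.hom c.hom := by
  obtain ⟨Q, c, hic⟩ := hi
  exact ⟨⟨Q, E.goodTarget_of_deflation hwic ⟨I.obj, i.hom, hic⟩ Y.property⟩,
    ObjectProperty.homMk c, hic⟩

lemma exists_deflation_inflation (hwic : E.WeaklyIdempotentComplete)
    {X Y : E.GoodSubcategory} (f : X ⟶ Y) : ∃ (I : E.GoodSubcategory) (p : X ⟶ I) (i : I ⟶ Y),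
      E.Deflation p.hom ∧ E.Inflation i.hom ∧ p ≫ i = f := by
  obtain ⟨I, p, i, hp, hi, hpi⟩ := Y.property f.hom
  exact ⟨⟨I, E.goodTarget_of_deflation hwic hp X.property⟩, ObjectProperty.homMk p,
    ObjectProperty.homMk i, hp, hi, ObjectProperty.hom_ext _ hpi⟩

lemma hasKernels (hwic : E.WeaklyIdempotentComplete) : HasKernels E.GoodSubcategory where
  has_limit f := by
    obtain ⟨I, p, i, hp, hi, rfl⟩ := exists_deflation_inflation hwic f
    obtain ⟨K, k, hkp⟩ := exists_isConflation_of_deflation_hom hwic hp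
    have := mono_of_inflation_hom hi
    exact HasLimit.mk ⟨_, isKernelCompMono (isLimitOfIsConflation hkp) i rfl⟩

lemma hasCokernels (hwic : E.WeaklyIdempotentComplete) : HasCokernels E.GoodSubcategory where
  has_colimit f := by
    obtain ⟨I, p, i, hp, hi, rfl⟩ := exists_deflation_inflation hwic f
    obtain ⟨Q, c, hic⟩ := exists_isConflation_of_inflation_hom hwic hi
    have := epi_of_deflation_hom hp
    exact HasColimit.mk ⟨_, isCokernelEpiComp (isColimitOfIsConflation hic) p rfl⟩

lemma inflation_hom_of_mono (hwic : E.WeaklyIdempotentComplete) {X Y : E.GoodSubcategory}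
    (f : X ⟶ Y) [Mono f] : E.Inflation f.hom := by
  obtain ⟨I, p, i, hp, hi, rfl⟩ := exists_deflation_inflation hwic f
  obtain ⟨K, k, hkp⟩ := exists_isConflation_of_deflation_hom hwic hp
  have hk : k = 0 := by
    rw [← cancel_mono (p ≫ i), ← assoc, comp_eq_zero_of_isConflation hkp, zero_comp, zero_comp]
  have := E.isIso_of_isConflation_of_inflation_eq_zero hkp (congrArg InducedCategory.Hom.hom hk)
  exact E.inflation_comp _ _ (E.inflation_of_isIso _) hi

lemma deflation_hom_of_epi (hwic : E.WeaklyIdempotentComplete) {X Y : E.GoodSubcategory}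
    (f : X ⟶ Y) [Epi f] : E.Deflation f.hom := by
  obtain ⟨I, p, i, hp, hi, rfl⟩ := exists_deflation_inflation hwic f
  obtain ⟨Q, c, hic⟩ := exists_isConflation_of_inflation_hom hwic hi
  have hc : c = 0 := by
    rw [← cancel_epi (p ≫ i), assoc, comp_eq_zero_of_isConflation hic]
    simp
  have := E.isIso_of_isConflation_of_deflation_eq_zero hic (congrArg InducedCategory.Hom.hom hc)
  exact E.deflation_comp _ _ hp (E.deflation_of_isIso _)

lemma nonempty_abelian (hwic : E.WeaklyIdempotentComplete) :
    Nonempty (Abelian E.GoodSubcategory) := by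
  have := E.isClosedUnderBinaryProducts hwic
  have := hasFiniteProducts_of_has_binary_and_terminal (C := E.GoodSubcategory)
  have := hasKernels hwic
  have := hasCokernels hwic
  refine ⟨{ normalMonoOfMono := fun f _ => ?_, normalEpiOfEpi := fun f _ => ?_ }⟩
  · obtain ⟨Q, c, hfc⟩ :=
      exists_isConflation_of_inflation_hom hwic (inflation_hom_of_mono hwic f)
    exact ⟨⟨Q, c, _, isLimitOfIsConflation hfc⟩⟩
  · obtain ⟨K, k, hkf⟩ :=
      exists_isConflation_of_deflation_hom hwic (deflation_hom_of_epi hwic f)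
    exact ⟨⟨K, k, _, isColimitOfIsConflation hkf⟩⟩

/-- Factor `g = q ≫ j` admissibly: `f` and the kernel of `q` are both kernels of `g` in `C'`, and
then `q` and `g` are both cokernels of `f`. -/
lemma isConflation_of_isLimit_of_isColimit (hwic : E.WeaklyIdempotentComplete)
    {X Y Z : E.GoodSubcategory} {f : X ⟶ Y} {g : Y ⟶ Z} {w : f ≫ g = 0}
    (hf : IsLimit (KernelFork.ofι f w)) (hg : IsColimit (CokernelCofork.ofπ g w)) :
    E.IsConflation f.hom g.hom := by
  obtain ⟨I, q, j, hq, hj, rfl⟩ := exists_deflation_inflation hwic g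
  obtain ⟨K, k, hkq⟩ := exists_isConflation_of_deflation_hom hwic hq
  have := mono_of_inflation_hom hj
  let e := hf.conePointUniqueUpToIso (isKernelCompMono (isLimitOfIsConflation hkq) j rfl)
  have he : e.inv ≫ f = k := hf.conePointUniqueUpToIso_inv_comp _ WalkingParallelPair.zero
  have hfq : E.IsConflation f.hom q.hom :=
    E.conflation_iso ((ObjectProperty.ι _).mapIso e.symm) (Iso.refl _) (Iso.refl _) hkq
      (by simp [← he]) (by simp)
  let e' := (isColimitOfIsConflation hfq).coconePointUniqueUpToIso hg
  have he' : q ≫ e'.hom = q ≫ j :=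
    (isColimitOfIsConflation hfq).comp_coconePointUniqueUpToIso_hom hg WalkingParallelPair.one
  exact E.conflation_iso (Iso.refl _) (Iso.refl _) ((ObjectProperty.ι _).mapIso e') hfq (by simp)
    (by simpa using congrArg InducedCategory.Hom.hom he')

end GoodSubcategory

end ExactStructure

/-- **(Proposition, `C'` is a wide subcategory.)** Let `C` be a weakly idempotent
complete exact category and `C'` the full subcategory of objects `X` such that every
morphism of `C` with target `X` is admissible. Then `C'` is closed under extensions,
`C'` (with the exact structure inherited from `C`) is an abelian category, and the
inclusion `C' → C` is exact: the short exact sequences of `C'` (equivalently, its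
kernel-cokernel pairs) are exactly the conflations of `C` with all terms in `C'`.
In particular `C'` is a wide subcategory of `C`. -/
theorem goodTarget_is_wide (E : ExactStructure C)
    (hwic : E.WeaklyIdempotentComplete) :
    (∀ {L M N : C} (f : L ⟶ M) (g : M ⟶ N), E.IsConflation f g →
      E.GoodTarget L → E.GoodTarget N → E.GoodTarget M) ∧
    Nonempty (Abelian (ObjectProperty.FullSubcategory E.GoodTarget)) ∧
    (∀ (X Y Z : ObjectProperty.FullSubcategory E.GoodTarget) (f : X ⟶ Y) (g : Y ⟶ Z),
      ((f ≫ g = 0) ∧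
        (∀ (V : ObjectProperty.FullSubcategory E.GoodTarget) (k : V ⟶ Y), k ≫ g = 0 →
          ∃! l : V ⟶ X, l ≫ f = k) ∧
        (∀ (V : ObjectProperty.FullSubcategory E.GoodTarget) (k : Y ⟶ V), f ≫ k = 0 →
          ∃! l : Z ⟶ V, g ≫ l = k))
      ↔ E.IsConflation f.hom g.hom) := by
  refine ⟨fun _ _ hfg hL hN => E.goodTarget_of_isConflation hwic hfg hL hN,
    E.nonempty_abelian hwic, fun X Y Z f g => ⟨fun ⟨w, hker, hcoker⟩ => ?_, fun h => ?_⟩⟩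
  · exact E.isConflation_of_isLimit_of_isColimit hwic
      (KernelFork.IsLimit.ofExistsUnique w (hker _))
      (CokernelCofork.IsColimit.ofExistsUnique w (hcoker _))
  · exact ⟨ExactStructure.comp_eq_zero_of_isConflation h,
      fun _ => ExactStructure.existsUnique_lift_of_isConflation h,
      fun _ => ExactStructure.existsUnique_desc_of_isConflation h⟩
end

section
/- Let D be a triangulated category with a bounded t-structure, d ≥ 1, and Y a full subcategory of D^{[-d+1,0]} closed under d-factors. Then Y^⊥ = {Z ∈ D^{[-d+1,0]} : Hom(Y, Z) = 0} is a positive torsion-free class. -/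
open CategoryTheory Category Limits Pretriangulated Triangulated

universe v u

variable {C : Type u} [Category.{v} C] [Preadditive C] [HasZeroObject C] [HasShift C ℤ]
  [∀ (n : ℤ), (shiftFunctor C n).Additive] [Pretriangulated C]

/-- The t-structure `t` is bounded. -/
def IsBoundedTStr (t : TStructure C) : Prop :=
  ∀ X : C, ∃ a b : ℤ, t.ge a X ∧ t.le b X

/-- The `d`-extended heart `D^{[-d+1,0]}` of the t-structure `t`, as a set of objects. -/
def extHeart (t : TStructure C) (d : ℕ) : Set C :=
  fun X => t.le 0 X ∧ t.ge (1 - (d : ℤ)) X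

/-- A set of objects closed under isomorphisms. -/
def IsoClosed (S : Set C) : Prop := ∀ ⦃X Y : C⦄, (X ≅ Y) → X ∈ S → Y ∈ S

/-- `Z ∈ D^{[-d+1,0]}` is a `d`-factor of `𝒳`: there are `d` distinguished triangles
`Z_i → X_i → Z_{i-1} → Z_i[1]` (`1 ≤ i ≤ d`) with `Z_0 = Z`, `Z_i ∈ D^{[-d+1,0]}` and
`X_i ∈ 𝒳`. -/
def IsDFactor (t : TStructure C) (d : ℕ) (𝒳 : Set C) (Z : C) : Prop :=
  Z ∈ extHeart t d ∧
  ∃ (Zc : ℕ → C) (Xc : ℕ → C), Zc 0 = Z ∧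
    ∀ i : ℕ, 1 ≤ i → i ≤ d →
      Zc i ∈ extHeart t d ∧ Xc i ∈ 𝒳 ∧
      ∃ (f : Zc i ⟶ Xc i) (g : Xc i ⟶ Zc (i - 1)) (h : Zc (i - 1) ⟶ (Zc i)⟦(1 : ℤ)⟧),
        Triangle.mk f g h ∈ (distTriang C)

/-- `Fac_d(𝒳)`, the set of `d`-factors of `𝒳`. -/
def facd (t : TStructure C) (d : ℕ) (𝒳 : Set C) : Set C := fun Z => IsDFactor t d 𝒳 Z

/-- `𝒳` is closed under `d`-factors. -/
def ClosedUnderDFactors (t : TStructure C) (d : ℕ) (𝒳 : Set C) : Prop :=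
  ∀ Z : C, IsDFactor t d 𝒳 Z → Z ∈ 𝒳

/-- `S` is closed under extensions: the middle term of any distinguished triangle whose
outer terms lie in `S` lies in `S`. -/
def ExtClosed (S : Set C) : Prop :=
  ∀ ⦃X Y Z : C⦄ (f : X ⟶ Y) (g : Y ⟶ Z) (h : Z ⟶ X⟦(1 : ℤ)⟧),
    Triangle.mk f g h ∈ (distTriang C) → X ∈ S → Z ∈ S → Y ∈ S

/-- `𝒳 ⊆ D^{[-d+1,0]}` is `d`-FAE closed: closed under isomorphisms, `d`-factors and
extensions. -/
def IsDFAEClosed (t : TStructure C) (d : ℕ) (𝒳 : Set C) : Prop :=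
  𝒳 ⊆ extHeart t d ∧ IsoClosed 𝒳 ∧ ClosedUnderDFactors t d 𝒳 ∧ ExtClosed 𝒳

/-- `A * B`: the set of objects `Z` fitting in a distinguished triangle `X → Z → Y → X[1]`
with `X ∈ A` and `Y ∈ B`. -/
def star (A B : Set C) : Set C := fun Z =>
  ∃ (X : C) (_ : X ∈ A) (Y : C) (_ : Y ∈ B) (f : X ⟶ Z) (g : Z ⟶ Y) (h : Y ⟶ X⟦(1 : ℤ)⟧),
    Triangle.mk f g h ∈ (distTriang C)

/-- A suspended subcategory: closed under isomorphisms, extensions and positive shifts. -/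
def Suspended (S : Set C) : Prop :=
  IsoClosed S ∧ ExtClosed S ∧ ∀ X ∈ S, X⟦(1 : ℤ)⟧ ∈ S

/-- The aisle `D^{≤ n}` as a set. -/
def aisle (t : TStructure C) (n : ℤ) : Set C := fun X => t.le n X

/-- The coaisle `D^{≥ n}` as a set. -/
def coaisle (t : TStructure C) (n : ℤ) : Set C := fun X => t.ge n X

/-- The right Hom-orthogonal `S^⊥` inside the extended heart. -/
def rPerp (t : TStructure C) (d : ℕ) (S : Set C) : Set C :=
  fun Z => Z ∈ extHeart t d ∧ ∀ Y ∈ S, ∀ f : Y ⟶ Z, f = 0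

/-- The left Hom-orthogonal `^⊥S` inside the extended heart. -/
def lPerp (t : TStructure C) (d : ℕ) (S : Set C) : Set C :=
  fun Z => Z ∈ extHeart t d ∧ ∀ Y ∈ S, ∀ f : Z ⟶ Y, f = 0

/-- `S^{⊥_{≤0}} = {Z ∈ D^{[-d+1,0]} : Hom(S, Z[j]) = 0 for all j ≤ 0}`. -/
def rPerpLe0 (t : TStructure C) (d : ℕ) (S : Set C) : Set C :=
  fun Z => Z ∈ extHeart t d ∧ ∀ Y ∈ S, ∀ j : ℤ, j ≤ 0 → ∀ f : Y ⟶ Z⟦j⟧, f = 0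

/-- `^{⊥_{≤0}}S = {Z ∈ D^{[-d+1,0]} : Hom(Z, S[j]) = 0 for all j ≤ 0}`. -/
def lPerpLe0 (t : TStructure C) (d : ℕ) (S : Set C) : Set C :=
  fun Z => Z ∈ extHeart t d ∧ ∀ Y ∈ S, ∀ j : ℤ, j ≤ 0 → ∀ f : Z ⟶ Y⟦j⟧, f = 0

/-- `(T, F)` is a torsion pair in the extended heart. -/
def IsTorsionPair (t : TStructure C) (d : ℕ) (T F : Set C) : Prop :=
  T ⊆ extHeart t d ∧ F ⊆ extHeart t d ∧ T = lPerp t d F ∧ F = rPerp t d T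

/-- `(T, F)` is a positive torsion pair: a torsion pair with `Hom(T, F[j]) = 0` for all
`j ≤ 0`. -/
def IsPositiveTorsionPair (t : TStructure C) (d : ℕ) (T F : Set C) : Prop :=
  IsTorsionPair t d T F ∧
  ∀ X ∈ T, ∀ Y ∈ F, ∀ j : ℤ, j ≤ 0 → ∀ f : X ⟶ Y⟦j⟧, f = 0

/-- `(T, F)` is an `s`-torsion pair in the extended heart: `D^{[-d+1,0]} = T * F`,
`Hom(T, F) = 0` and `Hom(T, F[-1]) = 0`. -/
def IsSTorsionPair (t : TStructure C) (d : ℕ) (T F : Set C) : Prop :=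
  T ⊆ extHeart t d ∧ F ⊆ extHeart t d ∧
  (∀ Z ∈ extHeart t d,
    ∃ (X : C) (_ : X ∈ T) (Y : C) (_ : Y ∈ F) (f : X ⟶ Z) (g : Z ⟶ Y)
      (h : Y ⟶ X⟦(1 : ℤ)⟧), Triangle.mk f g h ∈ (distTriang C)) ∧
  (∀ X ∈ T, ∀ Y ∈ F, ∀ f : X ⟶ Y, f = 0) ∧
  (∀ X ∈ T, ∀ Y ∈ F, ∀ f : X ⟶ Y⟦(-1 : ℤ)⟧, f = 0)

/-- A semibrick in the `d`-extended heart. -/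
def IsSemibrick (t : TStructure C) (d : ℕ) (S : Set C) : Prop :=
  S ⊆ extHeart t d ∧
  (∀ X ∈ S, ¬ IsZero X ∧ ∀ f : X ⟶ X, f ≠ 0 → IsIso f) ∧
  (∀ X ∈ S, ∀ Y ∈ S, ∀ i : ℤ, i < 0 → ∀ f : X ⟶ Y⟦i⟧, f = 0) ∧
  (∀ X ∈ S, ∀ Y ∈ S, IsEmpty (X ≅ Y) → ∀ f : X ⟶ Y, f = 0)

/-- The simple objects of an extension-closed subcategory `W` (whose conflations are the
distinguished triangles with all three terms in `W`): nonzero objects admitting no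
conflation `L ↣ X ↠ M` in `W` with both `L` and `M` nonzero. -/
def simOf (W : Set C) : Set C := fun X =>
  X ∈ W ∧ ¬ IsZero X ∧
  ∀ ⦃L M : C⦄ (f : L ⟶ X) (g : X ⟶ M) (h : M ⟶ L⟦(1 : ℤ)⟧),
    Triangle.mk f g h ∈ (distTriang C) → L ∈ W → M ∈ W → IsZero L ∨ IsZero M

/-- `FiltMem S X`: the object `X` admits a finite filtration with subquotients in `S`. -/
inductive FiltMem (S : Set C) : C → Prop
  | zero (X : C) : IsZero X → FiltMem S X
  | step (Y X Sm : C) (f : Y ⟶ X) (g : X ⟶ Sm) (h : Sm ⟶ Y⟦(1 : ℤ)⟧) :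
      Triangle.mk f g h ∈ (distTriang C) → FiltMem S Y → Sm ∈ S → FiltMem S X

/-- `ExtClosureMem S X`: membership in the extension closure of `S` (the smallest
subcategory containing `S` and the zero objects, closed under isomorphisms and
extensions). -/
inductive ExtClosureMem (S : Set C) : C → Prop
  | of (X : C) : X ∈ S → ExtClosureMem S X
  | zero (X : C) : IsZero X → ExtClosureMem S X
  | iso (X Y : C) : (X ≅ Y) → ExtClosureMem S X → ExtClosureMem S Y
  | ext (X Y Z : C) (f : X ⟶ Y) (g : Y ⟶ Z) (h : Z ⟶ X⟦(1 : ℤ)⟧) :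
      Triangle.mk f g h ∈ (distTriang C) → ExtClosureMem S X → ExtClosureMem S Z →
      ExtClosureMem S Y

/-- A wide subcategory of the `d`-extended heart: closed under isomorphisms and
extensions, with `Hom(W, W[i]) = 0` for `i < 0`, and such that the restricted
extriangulated structure is abelian, i.e., there is an abelian structure on the
corresponding full subcategory whose short exact sequences (kernel-cokernel pairs) are
exactly the distinguished triangles with all three terms in `W`. -/
def IsWide (t : TStructure C) (d : ℕ) (W : Set C) : Prop :=
  W ⊆ extHeart t d ∧ IsoClosed W ∧ ExtClosed W ∧
  (∀ X ∈ W, ∀ Y ∈ W, ∀ i : ℤ, i < 0 → ∀ f : X ⟶ Y⟦i⟧, f = 0) ∧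
  ∃ _ : Abelian (ObjectProperty.FullSubcategory fun X => X ∈ W),
    ∀ (X Y Z : ObjectProperty.FullSubcategory fun X => X ∈ W) (f : X ⟶ Y) (g : Y ⟶ Z),
      ((f ≫ g = 0) ∧
        (∀ (V : ObjectProperty.FullSubcategory fun X => X ∈ W) (k : V ⟶ Y), k ≫ g = 0 →
          ∃! l : V ⟶ X, l ≫ f = k) ∧
        (∀ (V : ObjectProperty.FullSubcategory fun X => X ∈ W) (k : Y ⟶ V), f ≫ k = 0 →
          ∃! l : Z ⟶ V, g ≫ l = k))
      ↔ ∃ h : Z.obj ⟶ X.obj⟦(1 : ℤ)⟧,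
          Triangle.mk (show X.obj ⟶ Y.obj from f.hom) (show Y.obj ⟶ Z.obj from g.hom) h ∈
            (distTriang C)

/-- A finite-length wide subcategory: a wide subcategory in which every object has a
finite filtration with simple subquotients. -/
def IsFiniteLengthWide (t : TStructure C) (d : ℕ) (W : Set C) : Prop :=
  IsWide t d W ∧ ∀ X ∈ W, FiltMem (simOf W) X

/-- The shift `S[n]` of a set of objects. -/
def shiftSet (S : Set C) (n : ℤ) : Set C := fun X => X⟦-n⟧ ∈ S

/-- The exact heart `H_T = (D^{≤ -d} * T) ∩ (T^⊥[1] * D^{≥ 0})` of a `d`-FAE closed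
subcategory `T`. -/
def heartOf (t : TStructure C) (d : ℕ) (T : Set C) : Set C :=
  star (aisle t (-(d : ℤ))) T ∩ star (shiftSet (rPerp t d T) 1) (coaisle t 0)

/-- `phiClosure t d S`: the smallest `d`-FAE closed subcategory of the extended heart
containing `S`. -/
def phiClosure (t : TStructure C) (d : ℕ) (S : Set C) : Set C :=
  fun X => ∀ U : Set C, IsDFAEClosed t d U → S ⊆ U → X ∈ U

/-! The torsion-pair axioms for `(^⊥(𝒴^⊥), 𝒴^⊥)` are formal. For positivity, truncating `Z⟦j⟧`
at degree `0` reduces everything to `Hom(𝒴, Z⟦j⟧) = 0` for `Z ∈ 𝒴^⊥` and `j ≤ 0`, proved by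
descending induction on `j`. Let `P → Y → T` truncate `Y ∈ 𝒴` at degree `1 - d`, so that `P` is
concentrated in degree `1 - d`. The triangles
`T → Y → Y ⊞ T⟦1⟧`, `P → Y → T`, `Y ⊞ P⟦-1⟧ → Y → P`, `P⟦-2⟧ → Y → Y ⊞ P⟦-1⟧`, …
exhibit `Y ⊞ T⟦1⟧` as a `d`-factor of `𝒴`. A map `Y → Z⟦j - 1⟧` vanishes on `P` for degree
reasons, so it factors through `T`, and maps `T → Z⟦j - 1⟧` vanish by the induction hypothesis
applied to `Y ⊞ T⟦1⟧ ∈ 𝒴`. -/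

section

variable (t : TStructure C)

lemma aisle_extClosed (n : ℤ) : ExtClosed (aisle t n) :=
  fun _ _ _ _ _ _ hT h₁ h₃ => (t.isLE₂ _ hT n ⟨h₁⟩ ⟨h₃⟩).le

lemma coaisle_extClosed (n : ℤ) : ExtClosed (coaisle t n) :=
  fun _ _ _ _ _ _ hT h₁ h₃ => (t.isGE₂ _ hT n ⟨h₁⟩ ⟨h₃⟩).ge

lemma extHeart_extClosed (d : ℕ) : ExtClosed (extHeart t d) :=
  fun _ _ _ f g h hT h₁ h₃ =>
    ⟨aisle_extClosed t 0 f g h hT h₁.1 h₃.1, coaisle_extClosed t _ f g h hT h₁.2 h₃.2⟩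

lemma biprod_mem_extHeart {d : ℕ} {X Y : C} (hX : X ∈ extHeart t d) (hY : Y ∈ extHeart t d) :
    (X ⊞ Y) ∈ extHeart t d :=
  extHeart_extClosed t d _ _ _ (binaryBiproductTriangle_distinguished X Y) hX hY

lemma mem_extHeart_of_le_of_ge {d : ℕ} {X : C} {a b : ℤ} (ha : a ≤ 0) (hb : 1 - (d : ℤ) ≤ b)
    (hX₁ : t.le a X) (hX₂ : t.ge b X) : X ∈ extHeart t d :=
  ⟨t.le_monotone ha _ hX₁, t.ge_antitone hb _ hX₂⟩

lemma exists_distTriang_truncation {d : ℕ} {Y : C} (hY : Y ∈ extHeart t d) :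
    ∃ (P T : C) (_ : t.le (1 - d) P) (_ : t.ge (1 - d) P) (_ : t.le 0 T) (_ : t.ge (2 - d) T)
      (f : P ⟶ Y) (g : Y ⟶ T) (h : T ⟶ P⟦(1 : ℤ)⟧), Triangle.mk f g h ∈ distTriang C := by
  obtain ⟨P, T, hP, hT, f, g, h, hdist⟩ := t.exists_triangle Y (1 - d) (2 - d) (by ring)
  refine ⟨P, T, hP, ?_, ?_, hT, f, g, h, hdist⟩
  · exact coaisle_extClosed t _ _ _ _ (inv_rot_of_distTriang _ hdist)
      (t.ge_antitone (by omega) _ (t.ge_shift (2 - d) (-1) (3 - d) (by ring) T hT)) hY.2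
  · exact aisle_extClosed t 0 _ _ _ (rot_of_distTriang _ hdist) hY.1
      (t.le_monotone (by omega) _ (t.le_shift (1 - d) 1 (-d) (by ring) P hP))

lemma exists_distTriang_of_iso {T : Triangle C} (hT : T ∈ distTriang C) {A B D : C}
    (e₁ : T.obj₁ ≅ A) (e₂ : T.obj₂ ≅ B) (e₃ : T.obj₃ ≅ D) :
    ∃ (f : A ⟶ B) (g : B ⟶ D) (h : D ⟶ A⟦(1 : ℤ)⟧), Triangle.mk f g h ∈ distTriang C :=
  ⟨e₁.inv ≫ T.mor₁ ≫ e₂.hom, e₂.inv ≫ T.mor₂ ≫ e₃.hom, e₃.inv ≫ T.mor₃ ≫ e₁.hom⟦(1 : ℤ)⟧',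
    isomorphic_distinguished _ hT _ (Triangle.isoMk _ _ e₁.symm e₂.symm e₃.symm
      (by dsimp; erw [assoc, assoc, Iso.hom_inv_id, comp_id])
      (by dsimp; erw [assoc, assoc, Iso.hom_inv_id, comp_id])
      (by dsimp; erw [assoc, assoc, ← Functor.map_comp, Iso.hom_inv_id,
        CategoryTheory.Functor.map_id, comp_id]))⟩

lemma exists_distTriang_to_biprod (Y B : C) {A : C} (e : A ≅ B⟦(-1 : ℤ)⟧) :
    ∃ (f : A ⟶ Y) (g : Y ⟶ Y ⊞ B) (h : Y ⊞ B ⟶ A⟦(1 : ℤ)⟧), Triangle.mk f g h ∈ distTriang C :=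
  exists_distTriang_of_iso (inv_rot_of_distTriang _ (binaryBiproductTriangle_distinguished Y B))
    e.symm (Iso.refl _) (Iso.refl _)

lemma exists_distTriang_from_biprod (Y A : C) {B : C} (e : B ≅ A⟦(1 : ℤ)⟧) :
    ∃ (f : Y ⊞ A ⟶ Y) (g : Y ⟶ B) (h : B ⟶ (Y ⊞ A)⟦(1 : ℤ)⟧),
      Triangle.mk f g h ∈ distTriang C :=
  exists_distTriang_of_iso (rot_of_distTriang _ (binaryBiproductTriangle_distinguished A Y))
    (biprod.braiding A Y) (Iso.refl _) e.symm

/-- `IsDFactor t d 𝒳 Z` unfolds to `Z ∈ extHeart t d ∧ FactorChain t d 𝒳 d Z`; a free length `k`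
lets chains be built one triangle at a time. -/
def FactorChain (d : ℕ) (𝒳 : Set C) (k : ℕ) (Z : C) : Prop :=
  ∃ (Zc : ℕ → C) (Xc : ℕ → C), Zc 0 = Z ∧
    ∀ i : ℕ, 1 ≤ i → i ≤ k →
      Zc i ∈ extHeart t d ∧ Xc i ∈ 𝒳 ∧
      ∃ (f : Zc i ⟶ Xc i) (g : Xc i ⟶ Zc (i - 1)) (h : Zc (i - 1) ⟶ (Zc i)⟦(1 : ℤ)⟧),
        Triangle.mk f g h ∈ (distTriang C)

namespace FactorChain

variable {t} {d : ℕ} {𝒳 : Set C}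

lemma zero (Z : C) : FactorChain t d 𝒳 0 Z :=
  ⟨fun _ => Z, fun _ => Z, rfl, fun _ _ _ => by omega⟩

lemma cons {k : ℕ} {Z Z' X : C} (hZ' : Z' ∈ extHeart t d) (hX : X ∈ 𝒳)
    (hdist : ∃ (f : Z' ⟶ X) (g : X ⟶ Z) (h : Z ⟶ Z'⟦(1 : ℤ)⟧), Triangle.mk f g h ∈ distTriang C)
    (hchain : FactorChain t d 𝒳 k Z') : FactorChain t d 𝒳 (k + 1) Z := by
  obtain ⟨Zc, Xc, rfl, hc⟩ := hchain
  refine ⟨fun | 0 => Z | i + 1 => Zc i, fun | 0 => X | 1 => X | i + 2 => Xc (i + 1), rfl, ?_⟩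
  rintro (_ | _ | i) h₁ h₂
  · omega
  · exact ⟨hZ', hX, hdist⟩
  · exact hc (i + 1) (by omega) (by omega)

end FactorChain

/-- The chains `A ← Y ⊞ A⟦-1⟧ ← A⟦-2⟧ ← ⋯` and `Y ⊞ A ← A⟦-1⟧ ← Y ⊞ A⟦-2⟧ ← ⋯`, all of whose
middle terms are `Y`. -/
lemma factorChain_of_le_of_ge {d : ℕ} {𝒳 : Set C} {Y : C} (hY : Y ∈ 𝒳)
    (hYh : Y ∈ extHeart t d) (k : ℕ) :
    ∀ A : C, t.le (-k) A → t.ge (1 - d) A →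
      FactorChain t d 𝒳 k A ∧ FactorChain t d 𝒳 k (Y ⊞ A) := by
  induction k with
  | zero => exact fun A _ _ => ⟨.zero A, .zero _⟩
  | succ k ih =>
    intro A hA₁ hA₂
    have hA'₁ : t.le (-k) (A⟦(-1 : ℤ)⟧) := t.le_shift _ _ _ (by push_cast; ring) A hA₁
    have hA'₂ : t.ge (1 - d) (A⟦(-1 : ℤ)⟧) :=
      t.ge_antitone (by omega) _ (t.ge_shift _ (-1) (2 - d) (by ring) A hA₂)
    have hA' : A⟦(-1 : ℤ)⟧ ∈ extHeart t d :=
      mem_extHeart_of_le_of_ge t (by omega) le_rfl hA'₁ hA'₂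
    obtain ⟨ih₁, ih₂⟩ := ih _ hA'₁ hA'₂
    exact ⟨.cons (biprod_mem_extHeart t hYh hA') hY (exists_distTriang_from_biprod Y _
        ((shiftFunctorCompIsoId C (-1 : ℤ) 1 (by omega)).app A).symm) ih₂,
      .cons hA' hY (exists_distTriang_to_biprod Y A (Iso.refl _)) ih₁⟩

lemma biprod_shift_mem_of_closedUnderDFactors {d : ℕ} {𝒴 : Set C}
    (hfac : ClosedUnderDFactors t d 𝒴) {Y P T : C} (hY : Y ∈ 𝒴) (hYh : Y ∈ extHeart t d)
    (hP₁ : t.le (1 - d) P) (hP₂ : t.ge (1 - d) P) (hT₁ : t.le 0 T) (hT₂ : t.ge (2 - d) T)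
    {f : P ⟶ Y} {g : Y ⟶ T} {h : T ⟶ P⟦(1 : ℤ)⟧} (hdist : Triangle.mk f g h ∈ distTriang C) :
    (Y ⊞ T⟦(1 : ℤ)⟧) ∈ 𝒴 := by
  have hT : T ∈ extHeart t d := mem_extHeart_of_le_of_ge t le_rfl (by omega) hT₁ hT₂
  have hT' : T⟦(1 : ℤ)⟧ ∈ extHeart t d := mem_extHeart_of_le_of_ge t (a := -1) (by omega)
    (by omega) (t.le_shift 0 1 (-1) (by ring) T hT₁) (t.ge_shift (2 - d) 1 (1 - d) (by ring) T hT₂)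
  have hW := exists_distTriang_to_biprod Y (T⟦(1 : ℤ)⟧)
    ((shiftFunctorCompIsoId C (1 : ℤ) (-1) (by omega)).app T).symm
  suffices FactorChain t d 𝒴 d (Y ⊞ T⟦(1 : ℤ)⟧) from hfac _ ⟨biprod_mem_extHeart t hYh hT', this⟩
  rcases d with _ | _ | k
  · exact .zero _
  · exact .cons hT hY hW (.zero _)
  · have hP : P ∈ extHeart t (k + 2) := mem_extHeart_of_le_of_ge t (by omega) le_rfl hP₁ hP₂
    exact .cons hT hY hW (.cons hP hY ⟨f, g, h, hdist⟩
      (factorChain_of_le_of_ge t hY hYh k P (t.le_monotone (by omega) _ hP₁) hP₂).1)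

lemma rPerp_subset_rPerpLe0 {d : ℕ} {𝒴 : Set C} (h𝒴 : 𝒴 ⊆ extHeart t d)
    (hfac : ClosedUnderDFactors t d 𝒴) : rPerp t d 𝒴 ⊆ rPerpLe0 t d 𝒴 := by
  intro Z hZ
  suffices H : ∀ j : ℤ, j ≤ 0 → ∀ Y ∈ 𝒴, ∀ f : Y ⟶ Z⟦j⟧, f = 0 from
    ⟨hZ.1, fun Y hY j hj => H j hj Y hY⟩
  intro j hj
  induction j, hj using Int.leInductionDown with
  | base =>
    intro Y hY f
    rw [← cancel_mono ((shiftFunctorZero C ℤ).app Z).hom, zero_comp]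
    exact hZ.2 Y hY _
  | pred j hj ih =>
    intro Y hY f
    obtain ⟨P, T, hP₁, hP₂, hT₁, hT₂, p, q, r, hdist⟩ := exists_distTriang_truncation t (h𝒴 hY)
    obtain ⟨f', rfl⟩ : ∃ f' : T ⟶ Z⟦j - 1⟧, f = q ≫ f' := Triangle.yoneda_exact₂ _ hdist f
      (t.zero_of_isLE_of_isGE _ (1 - d) (1 - d - (j - 1)) (by omega) ⟨hP₁⟩
        ⟨t.ge_shift _ _ _ (by ring) Z hZ.1.2⟩)
    have hW := biprod_shift_mem_of_closedUnderDFactors t hfac hY (h𝒴 hY) hP₁ hP₂ hT₁ hT₂ hdist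
    have hshift : f'⟦(1 : ℤ)⟧' = 0 := by
      rw [← cancel_epi (biprod.snd : Y ⊞ T⟦(1 : ℤ)⟧ ⟶ _),
        ← cancel_mono ((shiftFunctorAdd' C (j - 1) 1 j (by ring)).app Z).inv, comp_zero,
        zero_comp, assoc]
      exact ih _ hW _
    rw [(shiftFunctor C (1 : ℤ)).map_injective (hshift.trans (Functor.map_zero _ _ _).symm),
      comp_zero]

lemma exists_factor_through_rPerp {d : ℕ} {S : Set C} (hS : S ⊆ aisle t 0) {X Z : C}
    (hX : t.le 0 X) (hZ : Z ∈ rPerpLe0 t d S) {j : ℤ} (hj : j ≤ 0) (f : X ⟶ Z⟦j⟧) :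
    ∃ (V : C) (_ : V ∈ rPerp t d S) (f' : X ⟶ V) (v : V ⟶ Z⟦j⟧), f = f' ≫ v := by
  obtain ⟨V, U, hV, hU, v, u, w, hdist⟩ := t.exists_triangle (Z⟦j⟧) 0 1 rfl
  obtain ⟨f', hf'⟩ := Triangle.coyoneda_exact₂ _ hdist f
    (t.zero_of_isLE_of_isGE _ 0 1 (by omega) ⟨hX⟩ ⟨hU⟩)
  have hU' : t.ge 2 (U⟦(-1 : ℤ)⟧) := t.ge_shift 1 (-1) 2 (by ring) U hU
  refine ⟨V, ⟨⟨hV, ?_⟩, fun Y hY y => ?_⟩, f', v, hf'⟩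
  · exact coaisle_extClosed t _ _ _ _ (inv_rot_of_distTriang _ hdist)
      (t.ge_antitone (by omega) _ hU')
      (t.ge_antitone (by omega) _ (t.ge_shift _ j (1 - d - j) (by ring) Z hZ.1.2))
  · obtain ⟨y', rfl⟩ := Triangle.coyoneda_exact₂ _ (inv_rot_of_distTriang _ hdist) y
      (hZ.2 Y hY j hj _)
    rw [t.zero_of_isLE_of_isGE y' 0 2 (by omega) ⟨hS hY⟩ ⟨hU'⟩]
    exact zero_comp

lemma isTorsionPair_lPerp_rPerp {d : ℕ} {S : Set C} (hS : S ⊆ extHeart t d) :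
    IsTorsionPair t d (lPerp t d (rPerp t d S)) (rPerp t d S) :=
  ⟨fun _ hX => hX.1, fun _ hZ => hZ.1, rfl, Set.ext fun Z =>
    ⟨fun hZ => ⟨hZ.1, fun _ hX f => hX.2 Z hZ f⟩,
      fun hZ => ⟨hZ.1, fun Y hY => hZ.2 Y ⟨hS hY, fun _ hV g => hV.2 Y hY g⟩⟩⟩⟩

lemma isPositiveTorsionPair_of_rPerp_subset_rPerpLe0 {d : ℕ} {S : Set C}
    (hS : S ⊆ extHeart t d) (hpos : rPerp t d S ⊆ rPerpLe0 t d S) :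
    IsPositiveTorsionPair t d (lPerp t d (rPerp t d S)) (rPerp t d S) := by
  refine ⟨isTorsionPair_lPerp_rPerp t hS, fun X hX Z hZ j hj f => ?_⟩
  obtain ⟨V, hV, f', v, rfl⟩ :=
    exists_factor_through_rPerp t (fun _ hY => (hS hY).1) hX.1.1 (hpos hZ) hj f
  rw [hX.2 V hV f', zero_comp]

end

theorem rPerp_is_positive_torsionFree_general (t : TStructure C)
    (d : ℕ) (𝒴 : Set C) (h𝒴 : 𝒴 ⊆ extHeart t d)
    (hfac : ClosedUnderDFactors t d 𝒴) :
    IsPositiveTorsionPair t d (lPerp t d (rPerp t d 𝒴)) (rPerp t d 𝒴) :=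
  isPositiveTorsionPair_of_rPerp_subset_rPerpLe0 t h𝒴 (rPerp_subset_rPerpLe0 t h𝒴 hfac)

/-- **(Corollary, `𝒴^⊥` is a positive torsion-free class.)** Let `𝒴 ⊆ D^{[-d+1,0]}` be
closed under `d`-factors. Then `𝒴^⊥` is a positive torsion-free class. -/
theorem rPerp_is_positive_torsionFree (t : TStructure C) (hb : IsBoundedTStr t)
    (d : ℕ) (hd : 1 ≤ d) (𝒴 : Set C) (h𝒴 : 𝒴 ⊆ extHeart t d)
    (hfac : ClosedUnderDFactors t d 𝒴) :
    IsPositiveTorsionPair t d (lPerp t d (rPerp t d 𝒴)) (rPerp t d 𝒴) :=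
  rPerp_is_positive_torsionFree_general t d 𝒴 h𝒴 hfac
end
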